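/- If G is an abelian group with rank G ≠ corank G, then corank G is finite, say equal to n, and G ≅ ℤ^n ⊕ H where corank H = 0 and rank H = rank G − n. -/

import Mathlib

/-!
A surjection of `G` onto the free module `ℤ^n` splits, so `G ≃ ℤ^n × ker` and, in particular,
`corank G ≤ rank G`. Hence `rank G ≠ corank G` forces the corank to be a finite supremum, attained
by some surjection `G → ℤ^n`. Maximality of `n` kills the corank of the kernel: a surjection of the
kernel onto `ℤ^m` would give one of `G` onto `ℤ^(n+m)`. Finally, injections `ℤ^k → G` are
linearly independent `k`-families, so `rank G` is the `ℤ`-module rank of `G` truncated to `ℕ∞`,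
and rank–nullity over `ℤ` gives `rank G = n + rank ker`.
-/

/-- The corank of an abelian group `G`: the supremum of the natural numbers `n` such that
there exists a surjective group homomorphism from `G` onto `ℤ^n`. -/
noncomputable def corank (G : Type) [AddCommGroup G] : ℕ∞ :=
  sSup {c : ℕ∞ | ∃ n : ℕ, c = (n : ℕ∞) ∧
    ∃ f : G →+ (Fin n → ℤ), Function.Surjective f}

/-- The (torsion-free) rank of an abelian group `G`: the supremum of the natural numbers `n`
such that there exists an injective group homomorphism from `ℤ^n` into `G`. -/
noncomputable def rank (G : Type) [AddCommGroup G] : ℕ∞ :=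
  sSup {c : ℕ∞ | ∃ n : ℕ, c = (n : ℕ∞) ∧
    ∃ f : (Fin n → ℤ) →+ G, Function.Injective f}

open Function

lemma ENat.sSup_natCast_le (t : ℕ∞) : sSup {c : ℕ∞ | ∃ n : ℕ, c = n ∧ (n : ℕ∞) ≤ t} = t :=
  le_antisymm (sSup_le <| by rintro _ ⟨n, rfl, hn⟩; exact hn)
    (ENat.forall_natCast_le_iff_le.mp fun n hn ↦ le_sSup ⟨n, rfl, hn⟩)

lemma nonempty_linearEquiv_prod_ker {R M P : Type*} [Ring R] [AddCommGroup M] [Module R M]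
    [AddCommGroup P] [Module R P] [Module.Projective R P] {f : M →ₗ[R] P} (hf : Surjective f) :
    Nonempty (M ≃ₗ[R] P × LinearMap.ker f) := by
  obtain ⟨s, hs⟩ := Module.projective_lifting_property f LinearMap.id hf
  exact ⟨(((LinearMap.exact_subtype_ker_map f).splitSurjectiveEquiv
    (Submodule.injective_subtype _) ⟨s, hs⟩).1.trans (LinearEquiv.prodComm R _ _))⟩

section

variable {G G' : Type} [AddCommGroup G] [AddCommGroup G']

lemma rank_eq_toENat_rank : rank G = Cardinal.toENat (Module.rank ℤ G) := by
  rw [← ENat.sSup_natCast_le (Cardinal.toENat _), rank]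
  congr! 5 with c n
  rw [Cardinal.natCast_le_toENat, Module.le_rank_iff_exists_linearMap]
  exact and_congr_right fun _ ↦
    ⟨fun ⟨f, hf⟩ ↦ ⟨f.toIntLinearMap, hf⟩, fun ⟨f, hf⟩ ↦ ⟨f.toAddMonoidHom, hf⟩⟩

lemma rank_eq_add_rank_ker {n : ℕ} {f : G →ₗ[ℤ] (Fin n → ℤ)} (hf : Surjective f) :
    rank G = n + rank (LinearMap.ker f) := by
  rw [rank_eq_toENat_rank, rank_eq_toENat_rank, LinearMap.rank_eq_of_surjective hf, rank_fin_fun,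
    map_add, Cardinal.toENat_nat]

lemma natCast_le_corank {n : ℕ} (f : G →+ (Fin n → ℤ)) (hf : Surjective f) :
    (n : ℕ∞) ≤ corank G :=
  le_sSup ⟨n, rfl, f, hf⟩

lemma corank_le_of_surjective (p : G →+ G') (hp : Surjective p) : corank G' ≤ corank G :=
  sSup_le <| by
    rintro _ ⟨n, rfl, f, hf⟩
    exact natCast_le_corank (f.comp p) (hf.comp hp)

lemma exists_surjective_of_corank_eq {n : ℕ} (h : corank G = n) :
    ∃ f : G →ₗ[ℤ] (Fin n → ℤ), Surjective f := by
  rw [corank] at h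
  have hfin := ENat.finite_of_sSup_lt_top (h ▸ ENat.natCast_lt_top n)
  obtain ⟨m, hm, f, hf⟩ :=
    Set.Nonempty.csSup_mem (by exact ⟨0, 0, rfl, 0, fun _ ↦ ⟨0, Subsingleton.elim _ _⟩⟩) hfin
  obtain rfl : m = n := by exact_mod_cast hm.symm.trans h
  exact ⟨f.toIntLinearMap, hf⟩

lemma corank_le_rank : corank G ≤ rank G :=
  sSup_le <| by
    rintro _ ⟨n, rfl, f, hf⟩
    obtain ⟨s, hs⟩ := Module.projective_lifting_property f.toIntLinearMap LinearMap.id hf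
    exact le_sSup ⟨n, rfl, s.toAddMonoidHom, LeftInverse.injective (LinearMap.congr_fun hs)⟩

lemma corank_ne_top_of_rank_ne_corank (h : rank G ≠ corank G) : corank G ≠ ⊤ :=
  fun htop ↦ h (top_le_iff.mp (htop ▸ corank_le_rank) |>.trans htop.symm)

lemma corank_eq_zero_of_corank_prod_le {n : ℕ} (h : corank ((Fin n → ℤ) × G) ≤ n) :
    corank G = 0 := by
  refine ENat.sSup_eq_zero.mpr ?_
  rintro _ ⟨m, rfl, p, hp⟩
  let E : ((Fin n → ℤ) × (Fin m → ℤ)) ≃+ (Fin (n + m) → ℤ) :=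
    ((LinearEquiv.sumArrowLequivProdArrow _ _ ℤ ℤ).symm.trans
      (LinearEquiv.funCongrLeft ℤ ℤ finSumFinEquiv.symm)).toAddEquiv
  have := (natCast_le_corank (E.toAddMonoidHom.comp ((AddMonoidHom.id _).prodMap p))
    (E.surjective.comp (surjective_id.prodMap hp))).trans h
  norm_cast at this ⊢
  omega

end

/-- If `G` is an abelian group with `rank G ≠ corank G`, then `corank G` is finite, say
equal to `n`, and `G ≅ ℤ^n ⊕ H` where `corank H = 0` and `rank H = rank G - n`. -/
theorem decomposition_of_rank_ne_corank (G : Type) [AddCommGroup G]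
    (h : rank G ≠ corank G) :
    ∃ n : ℕ, corank G = (n : ℕ∞) ∧
      ∃ (H : Type) (_i : AddCommGroup H),
        Nonempty (G ≃+ ((Fin n → ℤ) × H)) ∧ corank H = 0 ∧ rank H = rank G - n := by
  obtain ⟨n, hn⟩ := ENat.ne_top_iff_exists.mp (corank_ne_top_of_rank_ne_corank h)
  obtain ⟨f, hf⟩ := exists_surjective_of_corank_eq hn.symm
  obtain ⟨e⟩ := nonempty_linearEquiv_prod_ker hf
  refine ⟨n, hn.symm, LinearMap.ker f, inferInstance, ⟨e.toAddEquiv⟩,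
    corank_eq_zero_of_corank_prod_le (n := n) ?_, ?_⟩
  · exact hn ▸ corank_le_of_surjective e.toAddEquiv.toAddMonoidHom e.surjective
  · rw [rank_eq_add_rank_ker hf]
    exact (ENat.addLECancellable_of_ne_top (ENat.natCast_ne_top n)).add_tsub_cancel_left.symm
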